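/- arXiv:2305.18886 — 2 statements merged into one kernel-verified Lean document; each statement's English description precedes it below -/
import Mathlib

section
/- Exponential decay of the discrete relative entropy: suppose the boundary data are constant in time, p^k = p and q^k = q for all k ≥ 1 with u̲ ≤ p, q ≤ ū, suppose u̲ ≤ u^0_i ≤ ū for all i, and let û ∈ ℝ^{N+1} be the unique discrete stationary solution for data (p,q). Then there exists a constant c > 0, depending only on ℓ, α, β, μ, u̲, ū but not on N or τ, such that every discrete solution (u^k) satisfies (H_h(u^k|û) − H_h(u^{k−1}|û))/τ ≤ −c·H_h(u^k|û) for all k ≥ 1, where H_h(v|w) = h(½r(v_0,w_0) + Σ_{i=1}^{N−1} r(v_i,w_i) + ½r(v_N,w_N)) and r(u,û) = B(û) − B(u) − β(u)(û − u). -/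
open Filter MeasureTheory

/-- Nodal equations of one implicit Euler step of the mass-lumped P1 scheme. -/
def DiscreteStep (β μ : ℝ → ℝ) (h τ α : ℝ) (N : ℕ) (p q : ℝ) (w u : ℕ → ℝ) : Prop :=
  (∀ i : ℕ, 1 ≤ i → i ≤ N - 1 →
      h / τ * (β (u i) - β (w i)) -
        (μ ((u (i + 1) - u i) / h) - μ ((u i - u (i - 1)) / h)) = 0) ∧
    h / (2 * τ) * (β (u 0) - β (w 0)) - μ ((u 1 - u 0) / h) + α * u 0 = α * p ∧
    h / (2 * τ) * (β (u N) - β (w N)) + μ ((u N - u (N - 1)) / h) + α * u N = α * q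

/-- Nodal equations of the discrete stationary problem. -/
def DiscreteStationary (μ : ℝ → ℝ) (h α : ℝ) (N : ℕ) (p q : ℝ) (v : ℕ → ℝ) : Prop :=
  (∀ i : ℕ, 1 ≤ i → i ≤ N - 1 →
      μ ((v (i + 1) - v i) / h) - μ ((v i - v (i - 1)) / h) = 0) ∧
    -μ ((v 1 - v 0) / h) + α * v 0 = α * p ∧
    μ ((v N - v (N - 1)) / h) + α * v N = α * q

/-- Pointwise relative entropy density `r(u, û) = B(û) - B(u) - β(u)(û - u)` with
`B(u) = ∫₀ᵘ β(s) ds`. -/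
noncomputable def relEntropyDensity (β : ℝ → ℝ) (u uh : ℝ) : ℝ :=
  (∫ s in (0:ℝ)..uh, β s) - (∫ s in (0:ℝ)..u, β s) - β u * (uh - u)

/-- Trapezoidal-rule discrete relative entropy `H_h(v | w)`. -/
noncomputable def discreteRelEntropy (β : ℝ → ℝ) (h : ℝ) (N : ℕ) (v w : ℕ → ℝ) : ℝ :=
  h * ((1 / 2) * relEntropyDensity β (v 0) (w 0) +
    (∑ i ∈ Finset.Ico 1 N, relEntropyDensity β (v i) (w i)) +
    (1 / 2) * relEntropyDensity β (v N) (w N))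

/-! ### Auxiliary lemmas -/

section IntegralLemmas
variable (β : ℝ → ℝ)

lemma edre_integral_mono_bounds (hβc : Continuous β) (hm : Monotone β) (u v : ℝ) :
    β u * (v - u) ≤ ∫ s in u..v, β s ∧ (∫ s in u..v, β s) ≤ β v * (v - u) := by
  rcases le_total u v with h | h
  · constructor
    · have := intervalIntegral.integral_mono_on (μ := volume) (f := fun _ => β u)
        (g := β) h (intervalIntegrable_const) (hβc.intervalIntegrable u v)
        (fun x hx => hm hx.1)
      simpa [intervalIntegral.integral_const, smul_eq_mul, mul_comm] using this
    · have := intervalIntegral.integral_mono_on (μ := volume) (f := β)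
        (g := fun _ => β v) h (hβc.intervalIntegrable u v)
        (intervalIntegrable_const) (fun x hx => hm hx.2)
      simpa [intervalIntegral.integral_const, smul_eq_mul, mul_comm] using this
  · have e : ∫ s in u..v, β s = -∫ s in v..u, β s := (intervalIntegral.integral_symm v u)
    constructor
    · have := intervalIntegral.integral_mono_on (μ := volume) (f := β)
        (g := fun _ => β u) h (hβc.intervalIntegrable v u)
        (intervalIntegrable_const) (fun x hx => hm hx.2)
      rw [e]
      simp only [intervalIntegral.integral_const, smul_eq_mul] at this
      nlinarith
    · have := intervalIntegral.integral_mono_on (μ := volume) (f := fun _ => β v)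
        (g := β) h (intervalIntegrable_const) (hβc.intervalIntegrable v u)
        (fun x hx => hm hx.1)
      rw [e]
      simp only [intervalIntegral.integral_const, smul_eq_mul] at this
      nlinarith

variable (hβc : Continuous β) (hm : Monotone β)

include hβc in
lemma edre_rED_eq (u w : ℝ) :
    relEntropyDensity β u w = (∫ s in u..w, β s) - β u * (w - u) := by
  unfold relEntropyDensity
  rw [intervalIntegral.integral_interval_sub_left (hβc.intervalIntegrable 0 w)
    (hβc.intervalIntegrable 0 u)]

include hβc hm in
lemma edre_rED_nonneg (u w : ℝ) : 0 ≤ relEntropyDensity β u w := by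
  rw [edre_rED_eq β hβc]
  have := (edre_integral_mono_bounds β hβc hm u w).1
  linarith

include hβc hm in
lemma edre_rED_le (u w : ℝ) : relEntropyDensity β u w ≤ (β w - β u) * (w - u) := by
  rw [edre_rED_eq β hβc]
  have := (edre_integral_mono_bounds β hβc hm u w).2
  nlinarith

include hβc hm in
lemma edre_rED_convex_gap (u v w : ℝ) :
    relEntropyDensity β u w - relEntropyDensity β v w ≤ (u - w) * (β u - β v) := by
  rw [edre_rED_eq β hβc, edre_rED_eq β hβc]
  have h1 := (edre_integral_mono_bounds β hβc hm v u).1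
  have h3 : (∫ s in u..w, β s) - (∫ s in v..w, β s) = -∫ s in v..u, β s := by
    have a1 : (∫ s in (0:ℝ)..w, β s) - (∫ s in (0:ℝ)..u, β s) = ∫ s in u..w, β s :=
      intervalIntegral.integral_interval_sub_left (hβc.intervalIntegrable 0 w)
        (hβc.intervalIntegrable 0 u)
    have a2 : (∫ s in (0:ℝ)..w, β s) - (∫ s in (0:ℝ)..v, β s) = ∫ s in v..w, β s :=
      intervalIntegral.integral_interval_sub_left (hβc.intervalIntegrable 0 w)
        (hβc.intervalIntegrable 0 v)
    have a3 : (∫ s in (0:ℝ)..u, β s) - (∫ s in (0:ℝ)..v, β s) = ∫ s in v..u, β s :=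
      intervalIntegral.integral_interval_sub_left (hβc.intervalIntegrable 0 u)
        (hβc.intervalIntegrable 0 v)
    linarith
  nlinarith
end IntegralLemmas

section MVTLemmas
variable (f : ℝ → ℝ)

lemma edre_slope_ge_of_deriv_ge (hc : Continuous f)
    (hd : ∀ s : ℝ, s ≠ 0 → DifferentiableAt ℝ f s)
    (m a b : ℝ) (hab : a < b) (hne : ∀ x ∈ Set.Ioo a b, x ≠ (0:ℝ))
    (hm : ∀ x ∈ Set.Ioo a b, m ≤ deriv f x) :
    m * (b - a) ≤ f b - f a := by
  obtain ⟨c, hc', hslope⟩ := exists_hasDerivAt_eq_slope f (deriv f) hab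
    (hc.continuousOn) (fun x hx => (hd x (hne x hx)).hasDerivAt)
  have h1 : m ≤ (f b - f a) / (b - a) := hslope ▸ hm c hc'
  have h2 : 0 < b - a := by linarith
  calc m * (b - a) ≤ ((f b - f a) / (b - a)) * (b - a) := by nlinarith
    _ = f b - f a := by field_simp

lemma edre_slope_ge_through_zero (hc : Continuous f)
    (hd : ∀ s : ℝ, s ≠ 0 → DifferentiableAt ℝ f s)
    (m R a b : ℝ) (hmR : ∀ s : ℝ, s ≠ 0 → |s| ≤ R → m ≤ deriv f s)
    (ha : -R ≤ a) (hb : b ≤ R) (hab : a ≤ b) :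
    m * (b - a) ≤ f b - f a := by
  rcases eq_or_lt_of_le hab with rfl | hab
  · simp
  have key : ∀ x y : ℝ, x < y → -R ≤ x → y ≤ R → (∀ z ∈ Set.Ioo x y, z ≠ (0:ℝ)) →
      m * (y - x) ≤ f y - f x := by
    intro x y hxy hx hy hne
    refine edre_slope_ge_of_deriv_ge f hc hd m x y hxy hne (fun z hz => ?_)
    refine hmR z (hne z hz) (abs_le.mpr ⟨by linarith [hz.1], by linarith [hz.2]⟩)
  rcases le_or_gt 0 a with h0a | h0a
  · exact key a b hab ha hb (fun z hz => by have := hz.1; intro h; subst h; linarith)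
  rcases le_or_gt b 0 with hb0 | hb0
  · exact key a b hab ha hb (fun z hz => by have := hz.2; intro h; subst h; linarith)
  · have k1 : m * (0 - a) ≤ f 0 - f a :=
      key a 0 h0a ha (by linarith) (fun z hz => by have := hz.2; intro h; subst h; linarith)
    have k2 : m * (b - 0) ≤ f b - f 0 :=
      key 0 b hb0 (by linarith) hb (fun z hz => by have := hz.1; intro h; subst h; linarith)
    linarith

lemma edre_strictMono_of_inf (hc : Continuous f)
    (hd : ∀ s : ℝ, s ≠ 0 → DifferentiableAt ℝ f s)
    (hinf : ∀ R : ℝ, 0 < R → ∃ m : ℝ, 0 < m ∧ ∀ s : ℝ, s ≠ 0 → |s| ≤ R → m ≤ deriv f s) :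
    StrictMono f := by
  intro a b hab
  have hR : 0 < |a| + |b| + 1 := by positivity
  obtain ⟨m, hm, hmR⟩ := hinf _ hR
  have := edre_slope_ge_through_zero f hc hd m (|a| + |b| + 1) a b hmR
    (by cases abs_cases a with
      | inl h => nlinarith [abs_nonneg b]
      | inr h => nlinarith [abs_nonneg b])
    (by cases abs_cases b with
      | inl h => nlinarith [abs_nonneg a]
      | inr h => nlinarith [abs_nonneg a]) hab.le
  nlinarith

lemma edre_exists_lip (hc : Continuous f)
    (hd : ∀ x : ℝ, 0 < x → DifferentiableAt ℝ f x)
    (hdc : ContinuousOn (deriv f) (Set.Ioi 0))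
    (ulow uup : ℝ) (hul : 0 < ulow) (hbnd : ulow ≤ uup) :
    ∃ L : ℝ, 0 < L ∧ ∀ x y : ℝ, x ∈ Set.Icc ulow uup → y ∈ Set.Icc ulow uup → x ≤ y →
      f y - f x ≤ L * (y - x) := by
  have hsub : Set.Icc ulow uup ⊆ Set.Ioi 0 := fun z hz => lt_of_lt_of_le hul hz.1
  obtain ⟨z, _, hz⟩ := isCompact_Icc.exists_isMaxOn (Set.nonempty_Icc.mpr hbnd)
    ((hdc.mono hsub))
  rw [isMaxOn_iff] at hz
  refine ⟨max (deriv f z) 1, lt_of_lt_of_le one_pos (le_max_right _ _), ?_⟩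
  intro x y hx hy hxy
  rcases eq_or_lt_of_le hxy with rfl | hxy
  · simp
  obtain ⟨c, hc', hslope⟩ := exists_hasDerivAt_eq_slope f (deriv f) hxy
    (hc.continuousOn) (fun t ht => (hd t (lt_trans hul (lt_of_le_of_lt hx.1 ht.1))).hasDerivAt)
  have hcmem : c ∈ Set.Icc ulow uup := ⟨le_trans hx.1 hc'.1.le, le_trans hc'.2.le hy.2⟩
  have h1 : (f y - f x) / (y - x) ≤ max (deriv f z) 1 :=
    le_trans (hslope ▸ hz c hcmem) (le_max_left _ _)
  have h2 : 0 < y - x := by linarith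
  calc f y - f x = ((f y - f x)/(y-x)) * (y - x) := by field_simp
    _ ≤ max (deriv f z) 1 * (y - x) := by nlinarith
end MVTLemmas

lemma edre_abel_identity (e g : ℕ → ℝ) (N : ℕ) (hN : 1 ≤ N) :
    e 0 * g 1 + (∑ i ∈ Finset.Ico 1 N, e i * (g (i+1) - g i)) - e N * g N
      = -∑ i ∈ Finset.Icc 1 N, (e i - e (i-1)) * g i := by
  induction N, hN using Nat.le_induction with
  | base => simp; ring
  | succ N hN ih =>
    rw [Finset.sum_Ico_succ_top hN, Finset.sum_Icc_succ_top (by omega : 1 ≤ N + 1)]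
    simp only [Nat.add_sub_cancel]
    linarith

lemma edre_sum_range_split (r : ℕ → ℝ) (N : ℕ) (hN : 1 ≤ N) :
    ∑ i ∈ Finset.range (N+1), r i = r 0 + (∑ i ∈ Finset.Ico 1 N, r i) + r N := by
  rw [Finset.range_eq_Ico, Finset.sum_eq_sum_Ico_succ_bot (by omega : 0 < N + 1),
    Finset.sum_Ico_succ_top (by omega : 1 ≤ N)]
  ring

lemma edre_telescope (e : ℕ → ℝ) (i : ℕ) :
    ∑ j ∈ Finset.Icc 1 i, (e j - e (j-1)) = e i - e 0 := by
  induction i with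
  | zero => simp
  | succ i ih =>
    rw [Finset.sum_Icc_succ_top (by omega : 1 ≤ i+1), ih]
    simp only [Nat.add_sub_cancel]
    ring

lemma edre_max_principle (β μ : ℝ → ℝ) (hβm : StrictMono β) (hμm : Monotone μ) (hμ0 : μ 0 = 0)
    (h τ α : ℝ) (hh : 0 < h) (hτ : 0 < τ) (hα : 0 < α) (N : ℕ) (hN : 2 ≤ N)
    (p q ulow uup : ℝ) (hp1 : ulow ≤ p) (hp2 : p ≤ uup) (hq1 : ulow ≤ q) (hq2 : q ≤ uup)
    (w u : ℕ → ℝ) (hw : ∀ i ≤ N, ulow ≤ w i ∧ w i ≤ uup)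
    (hstep : DiscreteStep β μ h τ α N p q w u) :
    ∀ i ≤ N, ulow ≤ u i ∧ u i ≤ uup := by
  obtain ⟨heq, heq0, heqN⟩ := hstep
  have hN1 : 1 ≤ N := le_trans (by norm_num) hN
  have hup : ∀ i ≤ N, u i ≤ uup := by
    obtain ⟨i0, hi0mem, hi0⟩ := Finset.exists_max_image (Finset.range (N+1)) u
      ⟨0, Finset.mem_range.mpr (Nat.succ_pos N)⟩
    simp only [Finset.mem_range, Nat.lt_succ_iff] at hi0mem
    have hmax : ∀ j ≤ N, u j ≤ u i0 := fun j hj =>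
      hi0 j (Finset.mem_range.mpr (Nat.lt_succ_of_le hj))
    have key : u i0 ≤ uup := by
      by_contra hcon
      push_neg at hcon
      rcases Nat.eq_zero_or_pos i0 with rfl | hpos
      · have h1 : u 1 ≤ u 0 := hmax 1 hN1
        have hd : (u 1 - u 0) / h ≤ 0 := div_nonpos_iff.mpr (Or.inr ⟨by linarith, hh.le⟩)
        have hmu : μ ((u 1 - u 0) / h) ≤ 0 := hμ0 ▸ hμm hd
        have hb : β (w 0) < β (u 0) := hβm (lt_of_le_of_lt (hw 0 (Nat.zero_le N)).2 hcon)
        have hps : α * p < α * u 0 := mul_lt_mul_of_pos_left (by linarith) hα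
        have hpos' : 0 < h / (2 * τ) := by positivity
        have hA : 0 < h / (2 * τ) * (β (u 0) - β (w 0)) := mul_pos hpos' (by linarith)
        linarith [heq0]
      rcases eq_or_lt_of_le hi0mem with rfl | hlt
      · have h1 : u (i0 - 1) ≤ u i0 := hmax (i0-1) (Nat.sub_le i0 1)
        have hd : 0 ≤ (u i0 - u (i0 - 1)) / h := div_nonneg (by linarith) hh.le
        have hmu : 0 ≤ μ ((u i0 - u (i0 - 1)) / h) := hμ0 ▸ hμm hd
        have hb : β (w i0) < β (u i0) := hβm (lt_of_le_of_lt (hw i0 le_rfl).2 hcon)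
        have hps : α * q < α * u i0 := mul_lt_mul_of_pos_left (by linarith) hα
        have hpos' : 0 < h / (2 * τ) := by positivity
        have hA : 0 < h / (2 * τ) * (β (u i0) - β (w i0)) := mul_pos hpos' (by linarith)
        linarith [heqN]
      · have hle : i0 ≤ N - 1 := Nat.le_sub_one_of_lt hlt
        have e := heq i0 hpos hle
        have h1 : u (i0 + 1) ≤ u i0 := hmax (i0+1) (Nat.succ_le_of_lt hlt)
        have h2 : u (i0 - 1) ≤ u i0 := hmax (i0-1) (le_trans (Nat.sub_le i0 1) hi0mem)
        have hd1 : (u (i0+1) - u i0) / h ≤ 0 := div_nonpos_iff.mpr (Or.inr ⟨by linarith, hh.le⟩)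
        have hd2 : 0 ≤ (u i0 - u (i0-1)) / h := div_nonneg (by linarith) hh.le
        have hmu1 : μ ((u (i0+1) - u i0) / h) ≤ 0 := hμ0 ▸ hμm hd1
        have hmu2 : 0 ≤ μ ((u i0 - u (i0-1)) / h) := hμ0 ▸ hμm hd2
        have hb : β (w i0) < β (u i0) := hβm (lt_of_le_of_lt (hw i0 hi0mem).2 hcon)
        have hpos' : 0 < h / τ := by positivity
        have hA : 0 < h / τ * (β (u i0) - β (w i0)) := mul_pos hpos' (by linarith)
        linarith [e]
    exact fun i hi => le_trans (hmax i hi) key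
  have hlo : ∀ i ≤ N, ulow ≤ u i := by
    obtain ⟨i0, hi0mem, hi0⟩ := Finset.exists_min_image (Finset.range (N+1)) u
      ⟨0, Finset.mem_range.mpr (Nat.succ_pos N)⟩
    simp only [Finset.mem_range, Nat.lt_succ_iff] at hi0mem
    have hmin : ∀ j ≤ N, u i0 ≤ u j := fun j hj =>
      hi0 j (Finset.mem_range.mpr (Nat.lt_succ_of_le hj))
    have key : ulow ≤ u i0 := by
      by_contra hcon
      push_neg at hcon
      rcases Nat.eq_zero_or_pos i0 with rfl | hpos
      · have h1 : u 0 ≤ u 1 := hmin 1 hN1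
        have hd : 0 ≤ (u 1 - u 0) / h := div_nonneg (by linarith) hh.le
        have hmu : 0 ≤ μ ((u 1 - u 0) / h) := hμ0 ▸ hμm hd
        have hb : β (u 0) < β (w 0) := hβm (lt_of_lt_of_le hcon (hw 0 (Nat.zero_le N)).1)
        have hps : α * u 0 < α * p := mul_lt_mul_of_pos_left (by linarith) hα
        have hpos' : 0 < h / (2 * τ) := by positivity
        have hA : h / (2 * τ) * (β (u 0) - β (w 0)) < 0 := mul_neg_of_pos_of_neg hpos' (by linarith)
        linarith [heq0]
      rcases eq_or_lt_of_le hi0mem with rfl | hlt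
      · have h1 : u i0 ≤ u (i0 - 1) := hmin (i0-1) (Nat.sub_le i0 1)
        have hd : (u i0 - u (i0 - 1)) / h ≤ 0 := div_nonpos_iff.mpr (Or.inr ⟨by linarith, hh.le⟩)
        have hmu : μ ((u i0 - u (i0 - 1)) / h) ≤ 0 := hμ0 ▸ hμm hd
        have hb : β (u i0) < β (w i0) := hβm (lt_of_lt_of_le hcon (hw i0 le_rfl).1)
        have hps : α * u i0 < α * q := mul_lt_mul_of_pos_left (by linarith) hα
        have hpos' : 0 < h / (2 * τ) := by positivity
        have hA : h / (2 * τ) * (β (u i0) - β (w i0)) < 0 := mul_neg_of_pos_of_neg hpos' (by linarith)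
        linarith [heqN]
      · have hle : i0 ≤ N - 1 := Nat.le_sub_one_of_lt hlt
        have e := heq i0 hpos hle
        have h1 : u i0 ≤ u (i0 + 1) := hmin (i0+1) (Nat.succ_le_of_lt hlt)
        have h2 : u i0 ≤ u (i0 - 1) := hmin (i0-1) (le_trans (Nat.sub_le i0 1) hi0mem)
        have hd1 : 0 ≤ (u (i0+1) - u i0) / h := div_nonneg (by linarith) hh.le
        have hd2 : (u i0 - u (i0-1)) / h ≤ 0 := div_nonpos_iff.mpr (Or.inr ⟨by linarith, hh.le⟩)
        have hmu1 : 0 ≤ μ ((u (i0+1) - u i0) / h) := hμ0 ▸ hμm hd1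
        have hmu2 : μ ((u i0 - u (i0-1)) / h) ≤ 0 := hμ0 ▸ hμm hd2
        have hb : β (u i0) < β (w i0) := hβm (lt_of_lt_of_le hcon (hw i0 hi0mem).1)
        have hpos' : 0 < h / τ := by positivity
        have hA : h / τ * (β (u i0) - β (w i0)) < 0 := mul_neg_of_pos_of_neg hpos' (by linarith)
        linarith [e]
    exact fun i hi => le_trans key (hmin i hi)
  exact fun i hi => ⟨hlo i hi, hup i hi⟩

lemma edre_stationary_structure (μ : ℝ → ℝ) (hμm : StrictMono μ) (hμ0 : μ 0 = 0)
    (ℓ h α : ℝ) (hh : 0 < h) (hα : 0 < α) (N : ℕ) (hN : 2 ≤ N)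
    (hhN : (N : ℝ) * h = ℓ)
    (p q ulow uup : ℝ) (hp1 : ulow ≤ p) (hp2 : p ≤ uup) (hq1 : ulow ≤ q) (hq2 : q ≤ uup)
    (v : ℕ → ℝ) (hstat : DiscreteStationary μ h α N p q v) :
    ∃ d : ℝ,
      (∀ i : ℕ, 1 ≤ i → i ≤ N → (v i - v (i - 1)) / h = d) ∧
      (∀ i ≤ N, ulow ≤ v i ∧ v i ≤ uup) ∧
      |d| * ℓ ≤ uup - ulow ∧
      α * v 0 = α * p + μ d ∧ α * v N = α * q - μ d := by
  obtain ⟨hint, hb0, hbN⟩ := hstat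
  set d : ℝ := (v 1 - v 0) / h with hd_def
  have hC : ∀ j : ℕ, j + 1 ≤ N → (v (j + 1) - v j) / h = d := by
    intro j
    induction j with
    | zero => intro _; rfl
    | succ j ih =>
      intro hj
      have hj' : j + 1 ≤ N - 1 := by omega
      have e := hint (j + 1) (by omega) hj'
      simp only [Nat.add_sub_cancel] at e
      have : μ ((v (j + 1 + 1) - v (j + 1)) / h) = μ ((v (j + 1) - v j) / h) := by linarith
      have := hμm.injective this
      rw [this, ih (by omega)]
  have hC' : ∀ i : ℕ, 1 ≤ i → i ≤ N → (v i - v (i - 1)) / h = d := by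
    intro i h1 h2
    obtain ⟨j, rfl⟩ : ∃ j, i = j + 1 := ⟨i - 1, by omega⟩
    simpa using hC j (by omega)
  have hstepv : ∀ j : ℕ, j + 1 ≤ N → v (j + 1) = v j + h * d := by
    intro j hj
    have := hC j hj
    field_simp at this
    linarith
  have haff : ∀ i : ℕ, i ≤ N → v i = v 0 + i * (h * d) := by
    intro i
    induction i with
    | zero => intro _; simp
    | succ i ih =>
      intro hi
      rw [hstepv i hi, ih (by omega)]
      push_cast
      ring
  have hvN : v N = v 0 + ℓ * d := by
    rw [haff N le_rfl, ← hhN]; ring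
  have b0 : α * v 0 = α * p + μ d := by linarith
  have bN : α * v N = α * q - μ d := by
    rw [hC' N (by omega) le_rfl] at hbN; linarith
  refine ⟨d, hC', ?_, ?_, b0, bN⟩
  · intro i hi
    rcases le_or_gt 0 d with hd | hd
    · have hμd : 0 ≤ μ d := by rw [← hμ0]; exact hμm.monotone hd
      have hv0 : ulow ≤ v 0 := by nlinarith
      have hvNu : v N ≤ uup := by nlinarith
      have hlo : v 0 ≤ v i := by
        rw [haff i hi]
        have : 0 ≤ (i:ℝ) * (h*d) := mul_nonneg (Nat.cast_nonneg i) (mul_nonneg hh.le hd)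
        linarith
      have hhi : v i ≤ v N := by
        rw [haff i hi, haff N le_rfl]
        have h1 : (i : ℝ) ≤ (N : ℝ) := Nat.cast_le.mpr hi
        have := mul_le_mul_of_nonneg_right h1 (mul_nonneg hh.le hd)
        linarith
      exact ⟨le_trans hv0 hlo, le_trans hhi hvNu⟩
    · have hμd : μ d ≤ 0 := by rw [← hμ0]; exact hμm.monotone hd.le
      have hv0 : v 0 ≤ uup := by nlinarith
      have hvNl : ulow ≤ v N := by nlinarith
      have hhi : v i ≤ v 0 := by
        rw [haff i hi]
        have : (i:ℝ) * (h*d) ≤ 0 :=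
          mul_nonpos_of_nonneg_of_nonpos (Nat.cast_nonneg i) (by nlinarith)
        linarith
      have hlo : v N ≤ v i := by
        rw [haff i hi, haff N le_rfl]
        have h1 : (i : ℝ) ≤ (N : ℝ) := Nat.cast_le.mpr hi
        have := mul_le_mul_of_nonpos_right h1 (by nlinarith : h * d ≤ 0)
        linarith
      exact ⟨le_trans hvNl hlo, le_trans hhi hv0⟩
  · rcases le_or_gt 0 d with hd | hd
    · have hμd : 0 ≤ μ d := by rw [← hμ0]; exact hμm.monotone hd
      rw [abs_of_nonneg hd]
      nlinarith
    · have hμd : μ d ≤ 0 := by rw [← hμ0]; exact hμm.monotone hd.le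
      rw [abs_of_neg hd]
      nlinarith
set_option maxHeartbeats 1000000 in
/-- exponential decay of the discrete relative entropy towards the
discrete steady state for constant-in-time boundary data, with rate constant
independent of the mesh size and the time step. -/
theorem exponential_decay_discrete_relative_entropy
    (ℓ α : ℝ) (hℓ : 0 < ℓ) (hα : 0 < α)
    (β : ℝ → ℝ) (hβc : Continuous β) (hβm : StrictMono β)
    (hβd : ∀ x : ℝ, 0 < x → DifferentiableAt ℝ β x)
    (hβdc : ContinuousOn (deriv β) (Set.Ioi 0))
    (hβ' : ∀ x : ℝ, 0 < x → 0 < deriv β x)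
    (hB : Tendsto (fun u : ℝ => (∫ s in (0:ℝ)..u, β s) / |u|) (cocompact ℝ) atTop)
    (μ : ℝ → ℝ) (hμc : Continuous μ) (hμ0 : μ 0 = 0)
    (hμd : ∀ s : ℝ, s ≠ 0 → DifferentiableAt ℝ μ s)
    (hμ' : ∀ s : ℝ, s ≠ 0 → 0 < deriv μ s)
    (hμinf : ∀ R : ℝ, 0 < R → ∃ m : ℝ, 0 < m ∧ ∀ s : ℝ, s ≠ 0 → |s| ≤ R → m ≤ deriv μ s)
    (ulow uup : ℝ) (hul : 0 < ulow) (hbnd : ulow ≤ uup) :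
    ∃ c : ℝ, 0 < c ∧
      ∀ N : ℕ, 2 ≤ N → ∀ τ : ℝ, 0 < τ →
      ∀ p q : ℝ, ulow ≤ p → p ≤ uup → ulow ≤ q → q ≤ uup →
      ∀ uhat : ℕ → ℝ, DiscreteStationary μ (ℓ / N) α N p q uhat →
      ∀ u : ℕ → ℕ → ℝ,
        (∀ i ≤ N, ulow ≤ u 0 i ∧ u 0 i ≤ uup) →
        (∀ k : ℕ, 1 ≤ k → DiscreteStep β μ (ℓ / N) τ α N p q (u (k - 1)) (u k)) →
        ∀ k : ℕ, 1 ≤ k →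
          (discreteRelEntropy β (ℓ / N) N (u k) uhat -
              discreteRelEntropy β (ℓ / N) N (u (k - 1)) uhat) / τ ≤
            -c * discreteRelEntropy β (ℓ / N) N (u k) uhat := by
  classical
  have hβmono : Monotone β := hβm.monotone
  have hμS : StrictMono μ := edre_strictMono_of_inf μ hμc hμd hμinf
  have hμmono : Monotone μ := hμS.monotone
  set M := uup - ulow with hM_def
  have hM : 0 ≤ M := by rw [hM_def]; linarith
  have hMl : 0 ≤ M / ℓ := div_nonneg hM hℓ.le
  have hR : (0:ℝ) < M / ℓ + 1 := by linarith
  obtain ⟨m, hm, hmR⟩ := hμinf (M / ℓ + 1) hR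
  obtain ⟨L, hL, hLip⟩ := edre_exists_lip β hβc hβd hβdc ulow uup hul hbnd
  set C1 : ℝ := 4*L*ℓ*(1/α + 2*ℓ/m + 2) with hC1_def
  set C2 : ℝ := (2*L*ℓ*M^2 + 1)/m^2 with hC2_def
  set C : ℝ := max C1 C2 with hC_def
  have hC1pos : 0 < C1 := by
    have h1 : 0 < 1/α := one_div_pos.mpr hα
    have h2 : 0 < 2*ℓ/m := div_pos (by linarith) hm
    have h3 : 0 < 4*L*ℓ := by positivity
    rw [hC1_def]; nlinarith
  have hC2nn : 0 ≤ C2 := by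
    rw [hC2_def]
    apply div_nonneg _ (sq_nonneg m)
    have := mul_nonneg (mul_nonneg (by linarith : (0:ℝ) ≤ 2*L) hℓ.le) (sq_nonneg M)
    linarith
  have hCpos : 0 < C := lt_of_lt_of_le hC1pos (le_max_left _ _)
  refine ⟨1 / C, one_div_pos.mpr hCpos, ?_⟩
  intro N hN2 τ hτ p q hp1 hp2 hq1 hq2 uhat hstat u h0 hstep k hk
  have hNpos : (0:ℝ) < (N:ℝ) := Nat.cast_pos.mpr (by omega)
  set h : ℝ := ℓ / (N:ℝ) with hh_def
  have hh : 0 < h := div_pos hℓ hNpos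
  have hhN : (N:ℝ) * h = ℓ := by rw [hh_def]; field_simp
  obtain ⟨d, hCst, hvb, hdb, b0eq, bNeq⟩ := edre_stationary_structure μ hμS hμ0 ℓ h α hh hα
    N hN2 hhN p q ulow uup hp1 hp2 hq1 hq2 uhat hstat
  have hdabs : |d| ≤ M / ℓ := (le_div_iff₀ hℓ).mpr hdb
  obtain ⟨hdabs1, hdabs2⟩ := abs_le.mp hdabs
  -- uniform L∞ bounds on all time levels
  have hub : ∀ j : ℕ, ∀ i ≤ N, ulow ≤ u j i ∧ u j i ≤ uup := by
    intro j
    induction j with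
    | zero => exact h0
    | succ j ih =>
      have hs := hstep (j+1) (by omega)
      simp only [Nat.add_sub_cancel] at hs
      exact edre_max_principle β μ hβm hμmono hμ0 h τ α hh hτ hα N hN2 p q ulow uup
        hp1 hp2 hq1 hq2 (u j) (u (j+1)) ih hs
  set b : ℕ → ℝ := u k with hb_def
  set a : ℕ → ℝ := u (k-1) with ha_def
  obtain ⟨heqI, heq0, heqN⟩ := hstep k hk
  have hbB : ∀ i ≤ N, ulow ≤ b i ∧ b i ≤ uup := hub k
  set e : ℕ → ℝ := fun i => b i - uhat i with he_def
  set g : ℕ → ℝ := fun i => μ ((b i - b (i-1))/h) - μ d with hg_def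
  set e' : ℕ → ℝ := fun i => (b i - b (i-1))/h - d with he'_def
  set f : ℕ → ℝ := fun i => e' i * g i with hf_def
  set G : ℝ := ∑ i ∈ Finset.Icc 1 N, h * f i with hG_def
  set D : ℝ := α * e 0^2 + α * e N^2 + G with hD_def
  -- nodal identities
  have n0 : h/(2*τ) * (β (b 0) - β (a 0)) = g 1 - α * e 0 := by
    simp only [hg_def, he_def]
    norm_num
    linarith only [heq0, b0eq]
  have nN : h/(2*τ) * (β (b N) - β (a N)) = -g N - α * e N := by
    simp only [hg_def, he_def]
    linarith only [heqN, bNeq]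
  have nI : ∀ i ∈ Finset.Ico 1 N, h/τ * (β (b i) - β (a i)) = g (i+1) - g i := by
    intro i hi
    rw [Finset.mem_Ico] at hi
    have e1 := heqI i hi.1 (by omega)
    have e2 : g (i+1) = μ ((b (i+1) - b i)/h) - μ d := by
      simp only [hg_def, Nat.add_sub_cancel]
    rw [e2]
    simp only [hg_def]
    linarith only [e1]
  -- convexity gap
  have gap : ∀ i : ℕ, relEntropyDensity β (b i) (uhat i) - relEntropyDensity β (a i) (uhat i)
      ≤ e i * (β (b i) - β (a i)) := by
    intro i
    have := edre_rED_convex_gap β hβc hβmono (b i) (a i) (uhat i)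
    simpa [he_def] using this
  -- entropy difference bound
  have dHle : discreteRelEntropy β h N b uhat - discreteRelEntropy β h N a uhat ≤
      h * ((1/2)*(e 0 * (β (b 0) - β (a 0))) +
        (∑ i ∈ Finset.Ico 1 N, e i * (β (b i) - β (a i))) +
        (1/2)*(e N * (β (b N) - β (a N)))) := by
    unfold discreteRelEntropy
    rw [← mul_sub]
    apply mul_le_mul_of_nonneg_left _ hh.le
    have hmid : (∑ i ∈ Finset.Ico 1 N, relEntropyDensity β (b i) (uhat i)) -
        (∑ i ∈ Finset.Ico 1 N, relEntropyDensity β (a i) (uhat i)) ≤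
        ∑ i ∈ Finset.Ico 1 N, e i * (β (b i) - β (a i)) := by
      rw [← Finset.sum_sub_distrib]
      exact Finset.sum_le_sum (fun i _ => gap i)
    have h0' := gap 0
    have hN' := gap N
    calc (1/2) * relEntropyDensity β (b 0) (uhat 0) +
        (∑ i ∈ Finset.Ico 1 N, relEntropyDensity β (b i) (uhat i)) +
        (1/2) * relEntropyDensity β (b N) (uhat N) -
        ((1/2) * relEntropyDensity β (a 0) (uhat 0) +
        (∑ i ∈ Finset.Ico 1 N, relEntropyDensity β (a i) (uhat i)) +
        (1/2) * relEntropyDensity β (a N) (uhat N))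
        = (1/2) * (relEntropyDensity β (b 0) (uhat 0) - relEntropyDensity β (a 0) (uhat 0)) +
          ((∑ i ∈ Finset.Ico 1 N, relEntropyDensity β (b i) (uhat i)) -
            (∑ i ∈ Finset.Ico 1 N, relEntropyDensity β (a i) (uhat i))) +
          (1/2) * (relEntropyDensity β (b N) (uhat N) - relEntropyDensity β (a N) (uhat N)) := by
            ring
      _ ≤ (1/2)*(e 0 * (β (b 0) - β (a 0))) +
          (∑ i ∈ Finset.Ico 1 N, e i * (β (b i) - β (a i))) +
          (1/2)*(e N * (β (b N) - β (a N))) :=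
          add_le_add (add_le_add
            (mul_le_mul_of_nonneg_left h0' (by norm_num)) hmid)
            (mul_le_mul_of_nonneg_left hN' (by norm_num))
  -- the summed identity
  have EQ : h * ((1/2)*(e 0 * (β (b 0) - β (a 0))) +
        (∑ i ∈ Finset.Ico 1 N, e i * (β (b i) - β (a i))) +
        (1/2)*(e N * (β (b N) - β (a N)))) = τ * (-D) := by
    have t0 : h * ((1/2)*(e 0 * (β (b 0) - β (a 0)))) = τ * (e 0 * (g 1 - α * e 0)) := by
      have hn := n0
      field_simp at hn ⊢
      linear_combination (e 0) * hn
    have tN : h * ((1/2)*(e N * (β (b N) - β (a N)))) = τ * (e N * (-g N - α * e N)) := by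
      have hn := nN
      field_simp at hn ⊢
      linear_combination (e N) * hn
    have tI : h * (∑ i ∈ Finset.Ico 1 N, e i * (β (b i) - β (a i))) =
        τ * (∑ i ∈ Finset.Ico 1 N, e i * (g (i+1) - g i)) := by
      rw [Finset.mul_sum, Finset.mul_sum]
      apply Finset.sum_congr rfl
      intro i hi
      have hn := nI i hi
      field_simp at hn ⊢
      linear_combination (e i) * hn
    have AB := edre_abel_identity e g N (by omega)
    have hIcc : ∑ i ∈ Finset.Icc 1 N, (e i - e (i-1)) * g i = G := by
      rw [hG_def]
      apply Finset.sum_congr rfl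
      intro i hi
      rw [Finset.mem_Icc] at hi
      have hhat : (uhat i - uhat (i-1))/h = d := hCst i hi.1 hi.2
      have hhat' : uhat i - uhat (i-1) = h * d := by
        field_simp at hhat; linarith only [hhat]
      have hbb : b i - b (i-1) = h * ((b i - b (i-1))/h) := by field_simp
      simp only [hf_def, he'_def, he_def]
      calc (b i - uhat i - (b (i-1) - uhat (i-1))) * g i
          = ((b i - b (i-1)) - (uhat i - uhat (i-1))) * g i := by ring
        _ = (h * ((b i - b (i-1))/h) - h * d) * g i := by rw [← hbb, hhat']
        _ = h * (((b i - b (i-1))/h - d) * g i) := by ring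
    calc h * ((1/2)*(e 0 * (β (b 0) - β (a 0))) +
        (∑ i ∈ Finset.Ico 1 N, e i * (β (b i) - β (a i))) +
        (1/2)*(e N * (β (b N) - β (a N))))
        = h * ((1/2)*(e 0 * (β (b 0) - β (a 0)))) +
          h * (∑ i ∈ Finset.Ico 1 N, e i * (β (b i) - β (a i))) +
          h * ((1/2)*(e N * (β (b N) - β (a N)))) := by ring
      _ = τ * (e 0 * (g 1 - α * e 0)) + τ * (∑ i ∈ Finset.Ico 1 N, e i * (g (i+1) - g i))
          + τ * (e N * (-g N - α * e N)) := by rw [t0, tI, tN]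
      _ = τ * (-D) := by
          rw [hD_def, ← hIcc]
          linear_combination τ * AB
  -- dissipation bound on the entropy difference quotient
  have dHτ : (discreteRelEntropy β h N b uhat - discreteRelEntropy β h N a uhat) / τ ≤ -D := by
    rw [div_le_iff₀ hτ]
    calc discreteRelEntropy β h N b uhat - discreteRelEntropy β h N a uhat
        ≤ τ * (-D) := EQ ▸ dHle
      _ = -D * τ := by ring
  -- pointwise lower bounds on the dissipation terms
  have hf_nonneg : ∀ i ∈ Finset.Icc 1 N, 0 ≤ f i := by
    intro i _
    simp only [hf_def, he'_def, hg_def]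
    rcases le_total d ((b i - b (i-1))/h) with hle | hle
    · exact mul_nonneg (by linarith only [hle]) (by linarith only [hμmono hle])
    · exact mul_nonneg_of_nonpos_of_nonpos (by linarith only [hle])
        (by linarith only [hμmono hle])
  have hsmall : ∀ i ∈ Finset.Icc 1 N, |e' i| ≤ 1 → m * (e' i)^2 ≤ f i := by
    intro i hi hsm
    obtain ⟨habs1, habs2⟩ := abs_le.mp hsm
    simp only [he'_def] at habs1 habs2
    simp only [hf_def, he'_def, hg_def]
    set δ : ℝ := (b i - b (i-1))/h with hδ_def
    rcases le_total d δ with hle | hle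
    · have hs := edre_slope_ge_through_zero μ hμc hμd m (M/ℓ+1) d δ hmR
        (by linarith only [hdabs1]) (by linarith only [hdabs2, habs2]) hle
      have hA := mul_le_mul_of_nonneg_right hs (by linarith only [hle] : (0:ℝ) ≤ δ - d)
      linarith only [hA]
    · have hs := edre_slope_ge_through_zero μ hμc hμd m (M/ℓ+1) δ d hmR
        (by linarith only [hdabs1, habs1]) (by linarith only [hdabs2]) hle
      have hA := mul_le_mul_of_nonneg_right hs (by linarith only [hle] : (0:ℝ) ≤ d - δ)
      linarith only [hA]
  have hlarge : ∀ i ∈ Finset.Icc 1 N, 1 < |e' i| → m * |e' i| ≤ f i := by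
    intro i hi hlg
    simp only [hf_def, he'_def, hg_def]
    set δ : ℝ := (b i - b (i-1))/h with hδ_def
    rcases le_or_gt 0 (e' i) with hsgn | hsgn
    · have habs2 : 1 < e' i := by rwa [abs_of_nonneg hsgn] at hlg
      simp only [he'_def, ← hδ_def] at habs2 hsgn
      rw [abs_of_nonneg hsgn]
      have hstep1 : m * ((d+1) - d) ≤ μ (d+1) - μ d :=
        edre_slope_ge_through_zero μ hμc hμd m (M/ℓ+1) d (d+1) hmR
          (by linarith only [hdabs1]) (by linarith only [hdabs2]) (by linarith)
      have hmono2 : μ (d+1) ≤ μ δ := hμmono (by linarith only [habs2])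
      have hA := mul_le_mul_of_nonneg_right
        (by linarith only [hstep1, hmono2] : m ≤ μ δ - μ d)
        (by linarith only [habs2] : (0:ℝ) ≤ δ - d)
      linarith only [hA]
    · have habs2 : 1 < -(e' i) := by rwa [abs_of_neg hsgn] at hlg
      simp only [he'_def, ← hδ_def] at habs2 hsgn
      rw [abs_of_neg hsgn]
      have hstep1 : m * (d - (d-1)) ≤ μ d - μ (d-1) :=
        edre_slope_ge_through_zero μ hμc hμd m (M/ℓ+1) (d-1) d hmR
          (by linarith only [hdabs1]) (by linarith only [hdabs2]) (by linarith)
      have hmono2 : μ δ ≤ μ (d-1) := hμmono (by linarith only [habs2])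
      have hA := mul_le_mul_of_nonneg_right
        (by linarith only [hstep1, hmono2] : m ≤ μ d - μ δ)
        (by linarith only [habs2] : (0:ℝ) ≤ d - δ)
      linarith only [hA]
  have hGnn : 0 ≤ G := Finset.sum_nonneg (fun i hi => mul_nonneg hh.le (hf_nonneg i hi))
  have hGD : G ≤ D := by
    have h1 := mul_nonneg hα.le (sq_nonneg (e 0))
    have h2 := mul_nonneg hα.le (sq_nonneg (e N))
    rw [hD_def]; linarith only [h1, h2]
  have hDnn : 0 ≤ D := le_trans hGnn hGD
  -- total variation bound
  set T : ℝ := ∑ i ∈ Finset.Icc 1 N, h * |e' i| with hT_def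
  have hTnn : 0 ≤ T :=
    Finset.sum_nonneg (fun i _ => mul_nonneg hh.le (abs_nonneg _))
  set S1 : Finset ℕ := (Finset.Icc 1 N).filter (fun i => |e' i| ≤ 1) with hS1_def
  set S2 : Finset ℕ := (Finset.Icc 1 N).filter (fun i => ¬ |e' i| ≤ 1) with hS2_def
  set T1 : ℝ := ∑ i ∈ S1, h * |e' i| with hT1_def
  set T2 : ℝ := ∑ i ∈ S2, h * |e' i| with hT2_def
  have hT1nn : 0 ≤ T1 := Finset.sum_nonneg (fun i _ => mul_nonneg hh.le (abs_nonneg _))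
  have hT2nn : 0 ≤ T2 := Finset.sum_nonneg (fun i _ => mul_nonneg hh.le (abs_nonneg _))
  have hTsplit : T = T1 + T2 := by
    rw [hT_def, hT1_def, hT2_def, hS1_def, hS2_def]
    exact (Finset.sum_filter_add_sum_filter_not _ _ _).symm
  have hsubG : ∀ s : Finset ℕ, s ⊆ Finset.Icc 1 N → (∑ i ∈ s, h * f i) ≤ G := by
    intro s hs
    rw [hG_def]
    exact Finset.sum_le_sum_of_subset_of_nonneg hs
      (fun i hi _ => mul_nonneg hh.le (hf_nonneg i hi))
  have hB2 : m * T2 ≤ G := by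
    have hmm : m * T2 = ∑ i ∈ S2, m * (h * |e' i|) := by rw [hT2_def, Finset.mul_sum]
    rw [hmm]
    calc (∑ i ∈ S2, m * (h * |e' i|)) ≤ ∑ i ∈ S2, h * f i := by
          apply Finset.sum_le_sum
          intro i hi
          rw [hS2_def, Finset.mem_filter] at hi
          have hl := hlarge i hi.1 (by push_neg at hi; exact hi.2)
          have hA := mul_le_mul_of_nonneg_left hl hh.le
          linarith only [hA]
      _ ≤ G := hsubG S2 (Finset.filter_subset _ _)
  have hB1 : m * T1^2 ≤ ℓ * G := by
    have hcs := Finset.sum_mul_sq_le_sq_mul_sq S1 (fun _ => Real.sqrt h)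
      (fun i => Real.sqrt h * |e' i|)
    have he2 : (∑ i ∈ S1, Real.sqrt h * (Real.sqrt h * |e' i|)) = T1 := by
      rw [hT1_def]
      refine Finset.sum_congr rfl (fun i _ => ?_)
      rw [← mul_assoc, Real.mul_self_sqrt hh.le]
    have he3 : (∑ _i ∈ S1, (Real.sqrt h)^2) = S1.card * h := by
      rw [Finset.sum_const, Real.sq_sqrt hh.le, nsmul_eq_mul]
    have he4 : (∑ i ∈ S1, (Real.sqrt h * |e' i|)^2) = ∑ i ∈ S1, h * (e' i)^2 := by
      refine Finset.sum_congr rfl (fun i _ => ?_)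
      rw [mul_pow, Real.sq_sqrt hh.le, sq_abs]
    rw [he2, he3, he4] at hcs
    have hcard : (S1.card : ℝ) * h ≤ ℓ := by
      have h1 : S1.card ≤ N := by
        calc S1.card ≤ (Finset.Icc 1 N).card := Finset.card_filter_le _ _
          _ = N := by rw [Nat.card_Icc]; omega
      calc (S1.card : ℝ) * h ≤ (N:ℝ) * h :=
            mul_le_mul_of_nonneg_right (Nat.cast_le.mpr h1) hh.le
        _ = ℓ := hhN
    have hsum1 : m * (∑ i ∈ S1, h * (e' i)^2) ≤ G := by
      have hmm : m * (∑ i ∈ S1, h * (e' i)^2) = ∑ i ∈ S1, m * (h * (e' i)^2) :=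
        Finset.mul_sum _ _ _
      rw [hmm]
      calc (∑ i ∈ S1, m * (h * (e' i)^2)) ≤ ∑ i ∈ S1, h * f i := by
            apply Finset.sum_le_sum
            intro i hi
            rw [hS1_def, Finset.mem_filter] at hi
            have hl := hsmall i hi.1 hi.2
            have hA := mul_le_mul_of_nonneg_left hl hh.le
            linarith only [hA]
        _ ≤ G := hsubG S1 (Finset.filter_subset _ _)
    have hq1' : 0 ≤ ∑ i ∈ S1, h * (e' i)^2 :=
      Finset.sum_nonneg (fun i _ => mul_nonneg hh.le (sq_nonneg _))
    have hq2' : 0 ≤ (S1.card : ℝ) * h := mul_nonneg (Nat.cast_nonneg _) hh.le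
    have hx1 := mul_le_mul_of_nonneg_left hcs hm.le
    have hx2 := mul_le_mul_of_nonneg_left hsum1 hq2'
    have hx3 := mul_le_mul_of_nonneg_right hcard hGnn
    linarith only [hx1, hx2, hx3]
  -- bound on each nodal error
  have hediff : ∀ j ∈ Finset.Icc 1 N, e j - e (j-1) = h * e' j := by
    intro j hj
    rw [Finset.mem_Icc] at hj
    have hhat : (uhat j - uhat (j-1))/h = d := hCst j hj.1 hj.2
    have hhat' : uhat j - uhat (j-1) = h * d := by
      field_simp at hhat; linarith only [hhat]
    have hbb : b j - b (j-1) = h * ((b j - b (j-1))/h) := by field_simp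
    simp only [he_def, he'_def]
    calc b j - uhat j - (b (j-1) - uhat (j-1))
        = (b j - b (j-1)) - (uhat j - uhat (j-1)) := by ring
      _ = h * ((b j - b (j-1))/h) - h * d := by rw [← hbb, hhat']
      _ = h * ((b j - b (j-1))/h - d) := by ring
  have hebound : ∀ i ≤ N, (e i)^2 ≤ 2 * (e 0)^2 + 2 * T^2 := by
    intro i hi
    have htel := edre_telescope e i
    have habs : |e i - e 0| ≤ T := by
      rw [← htel]
      calc |∑ j ∈ Finset.Icc 1 i, (e j - e (j-1))|
          ≤ ∑ j ∈ Finset.Icc 1 i, |e j - e (j-1)| := Finset.abs_sum_le_sum_abs _ _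
        _ = ∑ j ∈ Finset.Icc 1 i, h * |e' j| := by
            refine Finset.sum_congr rfl (fun j hj => ?_)
            rw [Finset.mem_Icc] at hj
            rw [hediff j (Finset.mem_Icc.mpr ⟨hj.1, by omega⟩), abs_mul, abs_of_nonneg hh.le]
        _ ≤ T := by
            rw [hT_def]
            exact Finset.sum_le_sum_of_subset_of_nonneg
              (Finset.Icc_subset_Icc_right hi)
              (fun j _ _ => mul_nonneg hh.le (abs_nonneg _))
    obtain ⟨hab1, hab2⟩ := abs_le.mp habs
    have h1 : (e i - e 0)^2 ≤ T^2 := sq_le_sq' (by linarith only [hab1]) hab2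
    linarith only [h1, sq_nonneg (e i - 2 * e 0)]
  -- entropy upper bounds
  have hrB : ∀ i ≤ N, 0 ≤ relEntropyDensity β (b i) (uhat i) ∧
      relEntropyDensity β (b i) (uhat i) ≤ L * (e i)^2 := by
    intro i hi
    refine ⟨edre_rED_nonneg β hβc hβmono _ _, ?_⟩
    have hr := edre_rED_le β hβc hβmono (b i) (uhat i)
    have hbmem : b i ∈ Set.Icc ulow uup := ⟨(hbB i hi).1, (hbB i hi).2⟩
    have humem : uhat i ∈ Set.Icc ulow uup := ⟨(hvb i hi).1, (hvb i hi).2⟩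
    have hgoal : L * (e i)^2 = L * (uhat i - b i) * (uhat i - b i) := by
      simp only [he_def]; ring
    rw [hgoal]
    rcases le_total (b i) (uhat i) with hle | hle
    · have hl := hLip (b i) (uhat i) hbmem humem hle
      have hA := mul_le_mul_of_nonneg_right hl (by linarith only [hle] : 0 ≤ uhat i - b i)
      linarith only [hr, hA]
    · have hl := hLip (uhat i) (b i) humem hbmem hle
      have hA := mul_le_mul_of_nonneg_right hl (by linarith only [hle] : 0 ≤ b i - uhat i)
      linarith only [hr, hA]
  have hHsplit : discreteRelEntropy β h N b uhat ≤
      h * ∑ i ∈ Finset.range (N+1), relEntropyDensity β (b i) (uhat i) := by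
    unfold discreteRelEntropy
    rw [edre_sum_range_split (fun i => relEntropyDensity β (b i) (uhat i)) N (by omega)]
    apply mul_le_mul_of_nonneg_left _ hh.le
    have h0' := (hrB 0 (by omega)).1
    have hN' := (hrB N le_rfl).1
    linarith only [h0', hN']
  have hHle1 : discreteRelEntropy β h N b uhat ≤
      L * (h * ∑ i ∈ Finset.range (N+1), (e i)^2) := by
    calc discreteRelEntropy β h N b uhat
        ≤ h * ∑ i ∈ Finset.range (N+1), relEntropyDensity β (b i) (uhat i) := hHsplit
      _ ≤ h * ∑ i ∈ Finset.range (N+1), L * (e i)^2 := by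
          apply mul_le_mul_of_nonneg_left _ hh.le
          refine Finset.sum_le_sum (fun i hi => ?_)
          exact (hrB i (by rw [Finset.mem_range] at hi; omega)).2
      _ = L * (h * ∑ i ∈ Finset.range (N+1), (e i)^2) := by
          rw [Finset.mul_sum, Finset.mul_sum, Finset.mul_sum]
          exact Finset.sum_congr rfl (fun i _ => by ring)
  have hhN1 : h * ((N:ℝ)+1) ≤ 2*ℓ := by
    have hhle : h ≤ ℓ := by
      rw [hh_def]
      exact div_le_self hℓ.le (by exact_mod_cast (by omega : 1 ≤ N))
    linarith only [hhle, hhN]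
  have hsumE1 : ∑ i ∈ Finset.range (N+1), (e i)^2 ≤ ((N:ℝ)+1) * (2*(e 0)^2 + 2*T^2) := by
    calc ∑ i ∈ Finset.range (N+1), (e i)^2
        ≤ ∑ _i ∈ Finset.range (N+1), (2*(e 0)^2 + 2*T^2) := by
          refine Finset.sum_le_sum (fun i hi => ?_)
          exact hebound i (by rw [Finset.mem_range] at hi; omega)
      _ = ((N:ℝ)+1) * (2*(e 0)^2 + 2*T^2) := by
          rw [Finset.sum_const, Finset.card_range, nsmul_eq_mul]
          push_cast; ring
  have hsumE2 : ∑ i ∈ Finset.range (N+1), (e i)^2 ≤ ((N:ℝ)+1) * M^2 := by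
    calc ∑ i ∈ Finset.range (N+1), (e i)^2 ≤ ∑ _i ∈ Finset.range (N+1), M^2 := by
          refine Finset.sum_le_sum (fun i hi => ?_)
          rw [Finset.mem_range] at hi
          have hb1 := hbB i (by omega)
          have hv1 := hvb i (by omega)
          have : (e i)^2 = (b i - uhat i)^2 := by simp only [he_def]
          rw [this, hM_def]
          apply sq_le_sq'
          · linarith only [hb1.1, hv1.2]
          · linarith only [hb1.2, hv1.1]
      _ = ((N:ℝ)+1) * M^2 := by
          rw [Finset.sum_const, Finset.card_range, nsmul_eq_mul]
          push_cast; ring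
  have hsumEnn : 0 ≤ ∑ i ∈ Finset.range (N+1), (e i)^2 :=
    Finset.sum_nonneg (fun i _ => sq_nonneg _)
  have HB1 : discreteRelEntropy β h N b uhat ≤ 4*L*ℓ*((e 0)^2 + T^2) := by
    have s1 := mul_le_mul_of_nonneg_left hsumE1 hh.le
    have s2 := mul_le_mul_of_nonneg_right hhN1
      (by positivity : (0:ℝ) ≤ 2*(e 0)^2 + 2*T^2)
    have s3 : h * ∑ i ∈ Finset.range (N+1), (e i)^2 ≤ 2*ℓ*(2*(e 0)^2 + 2*T^2) := by
      linarith only [s1, s2]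
    have s4 := mul_le_mul_of_nonneg_left s3 hL.le
    linarith only [hHle1, s4]
  have HB2 : discreteRelEntropy β h N b uhat ≤ 2*L*ℓ*M^2 := by
    have s1 := mul_le_mul_of_nonneg_left hsumE2 hh.le
    have s2 := mul_le_mul_of_nonneg_right hhN1 (sq_nonneg M)
    have s3 : h * ∑ i ∈ Finset.range (N+1), (e i)^2 ≤ 2*ℓ*M^2 := by
      linarith only [s1, s2]
    have s4 := mul_le_mul_of_nonneg_left s3 hL.le
    linarith only [hHle1, s4]
  -- dissipation controls the entropy
  have he0D : α * (e 0)^2 ≤ D := by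
    have h2 := mul_nonneg hα.le (sq_nonneg (e N))
    rw [hD_def]; linarith only [h2, hGnn]
  have hTsq : m^2 * T^2 ≤ 2*m*ℓ*G + 2*G^2 := by
    have k1 := mul_le_mul_of_nonneg_left hB1 hm.le
    have k2 := mul_self_le_mul_self (mul_nonneg hm.le hT2nn) hB2
    rw [hTsplit]
    nlinarith only [k1, k2, sq_nonneg (m*T1 - m*T2)]
  have hHD : discreteRelEntropy β h N b uhat ≤ C * D := by
    rcases le_or_gt G (m^2) with hGm | hGm
    · have f1 : G^2 ≤ m^2*D := by
        have a1 := mul_le_mul_of_nonneg_right hGm hGnn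
        have a2 := mul_le_mul_of_nonneg_left hGD (sq_nonneg m)
        nlinarith only [a1, a2]
      have f2 : 2*m*ℓ*G ≤ 2*m*ℓ*D :=
        mul_le_mul_of_nonneg_left hGD (by positivity : (0:ℝ) ≤ 2*m*ℓ)
      have he0α : (e 0)^2 ≤ D/α := by
        rw [le_div_iff₀ hα]
        linarith only [he0D]
      have hTD : T^2 ≤ 2*ℓ*D/m + 2*D := by
        rw [← mul_le_mul_iff_right₀ (show (0:ℝ) < m^2 by positivity)]
        have hq : m^2*(2*ℓ*D/m + 2*D) = 2*m*ℓ*D + 2*m^2*D := by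
          field_simp
        rw [hq]
        linarith only [hTsq, f1, f2]
      have hx := add_le_add he0α hTD
      have hy := mul_le_mul_of_nonneg_left hx (by positivity : (0:ℝ) ≤ 4*L*ℓ)
      have hz : 4*L*ℓ*(D/α + (2*ℓ*D/m + 2*D)) = C1 * D := by
        rw [hC1_def]; field_simp; ring
      have hw : C1 * D ≤ C * D :=
        mul_le_mul_of_nonneg_right (le_max_left _ _) hDnn
      linarith only [HB1, hy, hz ▸ hy, hw, hz.ge, hz.le, HB1.trans (hz ▸ hy)]
    · have hC2m : C2 * m^2 = 2*L*ℓ*M^2 + 1 := by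
        rw [hC2_def]; field_simp
      have hmD : m^2 ≤ D := by linarith only [hGm, hGD]
      have hC2D : C2 * m^2 ≤ C2 * D := mul_le_mul_of_nonneg_left hmD hC2nn
      have hw : C2 * D ≤ C * D :=
        mul_le_mul_of_nonneg_right (le_max_right _ _) hDnn
      linarith only [HB2, hC2m, hC2D, hw]
  have hfin1 : (1/C) * discreteRelEntropy β h N b uhat ≤ (1/C) * (C * D) :=
    mul_le_mul_of_nonneg_left hHD (by positivity)
  have hfin2 : (1/C) * (C * D) = D := by field_simp
  linarith only [dHτ, hfin1, hfin2]
end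

section
/- Stability of discrete stationary states with respect to boundary data: let û, v̂ ∈ ℝ^{N+1} be the discrete stationary solutions corresponding to boundary data (p₁, q₁) and (p₂, q₂) respectively. Then (û_0 − v̂_0)² + (û_N − v̂_N)² ≤ (p₁ − p₂)² + (q₁ − q₂)², and consequently ‖û − v̂‖² ≤ (2ℓ/3)·((p₁ − p₂)² + (q₁ − q₂)²), where ‖w‖² = Σ_{i=0}^{N−1} (h/3)(w_i² + w_i w_{i+1} + w_{i+1}²). -/
/-- Squared `L²(0,ℓ)` norm of the piecewise linear interpolant of `w`. -/
noncomputable def normSq (h : ℝ) (N : ℕ) (w : ℕ → ℝ) : ℝ :=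
  ∑ i ∈ Finset.range N, h / 3 * (w i ^ 2 + w i * w (i + 1) + w (i + 1) ^ 2)

lemma const_diff (μ : ℝ → ℝ) (hμm : StrictMono μ) (h : ℝ) (hh : h ≠ 0) (N : ℕ) (v : ℕ → ℝ)
    (heq : ∀ i : ℕ, 1 ≤ i → i ≤ N - 1 →
      μ ((v (i + 1) - v i) / h) - μ ((v i - v (i - 1)) / h) = 0) :
    ∀ i, i ≤ N - 1 → v (i + 1) - v i = v 1 - v 0 := by
  intro i
  induction i with
  | zero => intro _; rfl
  | succ k ih =>
    intro hk
    have hk' : k ≤ N - 1 := Nat.le_of_succ_le hk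
    have e := heq (k + 1) (by omega) hk
    simp only [Nat.add_sub_cancel] at e
    have e' : μ ((v (k + 1 + 1) - v (k + 1)) / h) = μ ((v (k + 1) - v k) / h) :=
      sub_eq_zero.mp e
    have e2 := hμm.injective e'
    have e3 : v (k + 1 + 1) - v (k + 1) = v (k + 1) - v k := by
      field_simp at e2; linarith
    rw [e3, ih hk']

lemma affine_vals (μ : ℝ → ℝ) (hμm : StrictMono μ) (h : ℝ) (hh : h ≠ 0) (N : ℕ) (v : ℕ → ℝ)
    (heq : ∀ i : ℕ, 1 ≤ i → i ≤ N - 1 →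
      μ ((v (i + 1) - v i) / h) - μ ((v i - v (i - 1)) / h) = 0) :
    ∀ i, i ≤ N → v i = v 0 + i * (v 1 - v 0) := by
  have cd := const_diff μ hμm h hh N v heq
  intro i
  induction i with
  | zero => intro _; simp
  | succ k ih =>
    intro hk
    have h1 : k ≤ N - 1 := by omega
    have h2 := cd k h1
    have h3 := ih (by omega)
    push_cast
    nlinarith [h2, h3]

lemma sumAffine (a e : ℝ) (N : ℕ) :
    ∑ i ∈ Finset.range N,
      ((a + i * e) ^ 2 + (a + i * e) * (a + (i + 1) * e) + (a + (i + 1) * e) ^ 2) =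
      3 * N * a ^ 2 + 3 * a * e * N ^ 2 + e ^ 2 * N ^ 3 := by
  induction N with
  | zero => simp
  | succ n ih => rw [Finset.sum_range_succ, ih]; push_cast; ring


lemma part1_aux (α A B P Q M : ℝ) (hα : 0 < α)
    (hb1 : α * A = α * P + M) (hb2 : α * B = α * Q - M)
    (hMBA : 0 ≤ M * (B - A)) : A ^ 2 + B ^ 2 ≤ P ^ 2 + Q ^ 2 := by
  have key : α ^ 2 * (P ^ 2 + Q ^ 2) =
      α ^ 2 * (A ^ 2 + B ^ 2) + 2 * α * (M * (B - A)) + 2 * M ^ 2 := by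
    linear_combination (M - α * A - α * P) * hb1 + (-(α * B) - α * Q - M) * hb2
  have h4 : α ^ 2 * (A ^ 2 + B ^ 2) ≤ α ^ 2 * (P ^ 2 + Q ^ 2) := by
    nlinarith [mul_nonneg hα.le hMBA, sq_nonneg M]
  exact le_of_mul_le_mul_left h4 (by positivity)

lemma part2_aux (ℓ A B P Q : ℝ) (hℓ : 0 < ℓ)
    (h1 : A ^ 2 + B ^ 2 ≤ P ^ 2 + Q ^ 2) :
    ℓ / 3 * (A ^ 2 + A * B + B ^ 2) ≤ 2 * ℓ / 3 * (P ^ 2 + Q ^ 2) := by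
  nlinarith [sq_nonneg (A - B), sq_nonneg A, sq_nonneg B, sq_nonneg P, sq_nonneg Q,
    mul_le_mul_of_nonneg_left h1 hℓ.le, mul_nonneg hℓ.le (sq_nonneg (A - B)),
    mul_nonneg hℓ.le (add_nonneg (sq_nonneg P) (sq_nonneg Q))]

/-- stability of discrete stationary states with respect to the
boundary data, in the boundary values and in the `L²` norm. -/
theorem stationary_states_stability
    (ℓ α : ℝ) (hℓ : 0 < ℓ) (hα : 0 < α)
    (N : ℕ) (hN : 2 ≤ N) (h : ℝ) (hh : h = ℓ / N)
    (μ : ℝ → ℝ) (hμc : Continuous μ) (hμm : StrictMono μ) (hμ0 : μ 0 = 0)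
    (p₁ q₁ p₂ q₂ : ℝ) (uhat vhat : ℕ → ℝ)
    (hu : DiscreteStationary μ h α N p₁ q₁ uhat)
    (hv : DiscreteStationary μ h α N p₂ q₂ vhat) :
    (uhat 0 - vhat 0) ^ 2 + (uhat N - vhat N) ^ 2 ≤ (p₁ - p₂) ^ 2 + (q₁ - q₂) ^ 2 ∧
      normSq h N (fun i => uhat i - vhat i) ≤
        (2 * ℓ / 3) * ((p₁ - p₂) ^ 2 + (q₁ - q₂) ^ 2) := by
  obtain ⟨hu1, hu2, hu3⟩ := hu
  obtain ⟨hv1, hv2, hv3⟩ := hv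
  have hNpos : (0 : ℝ) < N := by positivity
  have hhpos : 0 < h := by rw [hh]; positivity
  have hhne : h ≠ 0 := ne_of_gt hhpos
  set du : ℝ := uhat 1 - uhat 0 with hdu
  set dv : ℝ := vhat 1 - vhat 0 with hdv
  have uval := affine_vals μ hμm h hhne N uhat hu1
  have vval := affine_vals μ hμm h hhne N vhat hv1
  -- slopes at the last interval
  have hN1 : N - 1 + 1 = N := by omega
  have hulast : uhat N - uhat (N - 1) = du := by
    have := const_diff μ hμm h hhne N uhat hu1 (N - 1) le_rfl
    rwa [hN1] at this
  have hvlast : vhat N - vhat (N - 1) = dv := by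
    have := const_diff μ hμm h hhne N vhat hv1 (N - 1) le_rfl
    rwa [hN1] at this
  rw [hulast] at hu3
  rw [hvlast] at hv3
  set A : ℝ := uhat 0 - vhat 0 with hA
  set B : ℝ := uhat N - vhat N with hB
  set e : ℝ := du - dv with he
  set M : ℝ := μ (du / h) - μ (dv / h) with hM
  set P : ℝ := p₁ - p₂ with hP
  set Q : ℝ := q₁ - q₂ with hQ
  clear_value A B e M P Q
  -- boundary relations
  have hb1 : α * A = α * P + M := by simp only [hA, hP, hM]; linarith
  have hb2 : α * B = α * Q - M := by simp only [hB, hQ, hM]; linarith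
  have hBA : B - A = (N : ℝ) * e := by
    have h1 := uval N le_rfl
    have h2 := vval N le_rfl
    simp only [hB, hA, he, hdu, hdv]
    rw [h1, h2]; ring
  -- sign fact
  have hMe : 0 ≤ M * e := by
    rcases le_total du dv with hle | hle
    · have h5 : μ (du / h) ≤ μ (dv / h) :=
        hμm.monotone (div_le_div_of_nonneg_right hle hhpos.le)
      have hM0 : M ≤ 0 := by rw [hM]; linarith
      have he0 : e ≤ 0 := by rw [he]; linarith
      nlinarith [mul_nonneg (neg_nonneg.mpr hM0) (neg_nonneg.mpr he0)]
    · have h5 : μ (dv / h) ≤ μ (du / h) :=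
        hμm.monotone (div_le_div_of_nonneg_right hle hhpos.le)
      have hM0 : 0 ≤ M := by rw [hM]; linarith
      have he0 : 0 ≤ e := by rw [he]; linarith
      exact mul_nonneg hM0 he0
  -- part 1
  have hMBA : 0 ≤ M * (B - A) := by
    rw [hBA, show M * ((N : ℝ) * e) = (N : ℝ) * (M * e) by ring]
    exact mul_nonneg (Nat.cast_nonneg N) hMe
  have part1 : A ^ 2 + B ^ 2 ≤ P ^ 2 + Q ^ 2 := part1_aux α A B P Q M hα hb1 hb2 hMBA
  refine ⟨part1, ?_⟩
  -- part 2
  have hw : ∀ i ≤ N, uhat i - vhat i = A + i * e := by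
    intro i hi
    rw [uval i hi, vval i hi]
    simp only [hA, he, hdu, hdv]; ring
  have hnorm : normSq h N (fun i => uhat i - vhat i) =
      h / 3 * (3 * N * A ^ 2 + 3 * A * e * N ^ 2 + e ^ 2 * N ^ 3) := by
    rw [normSq, ← sumAffine A e N, Finset.mul_sum]
    apply Finset.sum_congr rfl
    intro i hi
    have hi' : i < N := Finset.mem_range.mp hi
    have e1 : uhat i - vhat i = A + i * e := hw i hi'.le
    have e2 : uhat (i + 1) - vhat (i + 1) = A + (i + 1) * e := by
      have := hw (i + 1) hi'
      push_cast at this ⊢; linarith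
    simp only [e1, e2]
  rw [hnorm]
  have hhN : h * N = ℓ := by rw [hh]; field_simp
  have hBval : B = A + N * e := by linarith [hBA]
  have hrw : h / 3 * (3 * N * A ^ 2 + 3 * A * e * N ^ 2 + e ^ 2 * N ^ 3) =
      ℓ / 3 * (A ^ 2 + A * B + B ^ 2) := by
    rw [hBval, ← hhN]; ring
  rw [hrw]
  exact part2_aux ℓ A B P Q hℓ part1
end
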